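/- Let σ > 0 and let f : ℝⁿ → [0,1] be measurable with σ-smoothed transform f̂(x) = E_{X ~ N(0, σ² Iₙ)}[f(x + X)] taking values in (0,1). Then the map x ↦ Φ⁻¹(f̂(x)) is (1/σ)-Lipschitz with respect to the Euclidean norm: for all x, y ∈ ℝⁿ, |Φ⁻¹(f̂(x)) - Φ⁻¹(f̂(y))| ≤ ‖x - y‖₂ / σ. -/

import Mathlib

/-!
Neyman–Pearson argument. Write `γ_x` for the Gaussian `N(x, σ² Iₙ)` and `w = y - x`. The
likelihood ratio `dγ_y/dγ_x (z) = exp ((2⟪z - x, w⟫ - ‖w‖²) / (2σ²))` is increasing in `⟪z, w⟫`,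
so among all `[0,1]`-valued `f` with `E_{γ_x} f = Φ(a)` the indicator of the half-space
`{⟪z - x, w⟫ ≤ σ a ‖w‖}` has the smallest mean under `γ_y`. Projecting onto `w` (the projection of
`N(0, σ² Iₙ)` on a direction is one-dimensional Gaussian, read off the characteristic function),
the half-space has `γ_x`-mass `Φ(a)` and `γ_y`-mass `Φ(a - ‖w‖/σ)`. Hence
`Φ(Φ⁻¹(f̂ x) - ‖x - y‖/σ) ≤ f̂ y`, and symmetrising gives the Lipschitz bound.
-/

open MeasureTheory Real

/-- The `n`-dimensional isotropic Gaussian measure `N(0, σ² Iₙ)`, with density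
`(2πσ²)^{-n/2} exp(-‖t‖²/(2σ²))` with respect to Lebesgue measure. -/
noncomputable def isoGaussian (n : ℕ) (σ : ℝ) : Measure (EuclideanSpace ℝ (Fin n)) :=
  volume.withDensity fun t =>
    ENNReal.ofReal ((2 * π * σ ^ 2) ^ (-(n : ℝ) / 2) * Real.exp (-‖t‖ ^ 2 / (2 * σ ^ 2)))

/-- The standard Gaussian CDF `Φ(a) = (1/√(2π)) ∫_{-∞}^a exp(-s²/2) ds`. -/
noncomputable def stdGaussianCDF (a : ℝ) : ℝ :=
  (Real.sqrt (2 * π))⁻¹ * ∫ s in Set.Iic a, Real.exp (-s ^ 2 / 2)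

/-- The inverse `Φ⁻¹ : (0,1) → ℝ` of the standard Gaussian CDF. -/
noncomputable def stdGaussianCDFInv : ℝ → ℝ :=
  Function.invFun stdGaussianCDF

open ProbabilityTheory Set
open scoped RealInnerProductSpace

namespace ProbabilityTheory

variable {μ : Measure ℝ} [IsProbabilityMeasure μ]

lemma continuous_cdf [NullSingletonClass μ] : Continuous (cdf μ) := by
  refine continuous_iff_continuousAt.2 fun a => continuousAt_iff_continuous_left_right.2
    ⟨?_, (cdf μ).right_continuous a⟩
  rw [← continuousWithinAt_Iio_iff_Iic, (monotone_cdf μ).continuousWithinAt_Iio_iff_leftLim_eq]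
  have h := (cdf μ).measure_singleton a
  rw [measure_cdf, measure_singleton, eq_comm, ENNReal.ofReal_eq_zero, sub_nonpos] at h
  exact le_antisymm (Monotone.leftLim_le (monotone_cdf μ) le_rfl) h

lemma strictMono_cdf_of_absolutelyContinuous (h : volume ≪ μ) : StrictMono (cdf μ) := by
  intro a b hab
  have hpos : μ (Ioc a b) ≠ 0 := fun h0 => hab.not_ge (by simpa using h h0)
  rwa [← measure_cdf μ, StieltjesFunction.measure_Ioc, ne_eq, ENNReal.ofReal_eq_zero, not_le,
    sub_pos] at hpos

end ProbabilityTheory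

lemma stdGaussianCDF_eq_cdf : stdGaussianCDF = cdf (gaussianReal 0 1) := by
  ext a
  rw [cdf_eq_real, measureReal_def, gaussianReal_apply_eq_integral _ one_ne_zero,
    ENNReal.toReal_ofReal (setIntegral_nonneg measurableSet_Iic fun _ _ =>
      gaussianPDFReal_nonneg _ _ _), stdGaussianCDF, ← integral_const_mul]
  simp [gaussianPDFReal]

lemma stdGaussianCDF_strictMono : StrictMono stdGaussianCDF :=
  stdGaussianCDF_eq_cdf ▸ strictMono_cdf_of_absolutelyContinuous
    (gaussianReal_absolutelyContinuous' 0 one_ne_zero)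

lemma stdGaussianCDF_continuous : Continuous stdGaussianCDF :=
  have := nullSingletonClass_gaussianReal (μ := 0) one_ne_zero
  stdGaussianCDF_eq_cdf ▸ continuous_cdf

lemma stdGaussianCDF_stdGaussianCDFInv {p : ℝ} (hp : p ∈ Ioo 0 1) :
    stdGaussianCDF (stdGaussianCDFInv p) = p := by
  refine Function.invFun_eq (mem_range_of_exists_le_of_exists_ge stdGaussianCDF_continuous ?_ ?_)
  · rw [stdGaussianCDF_eq_cdf]
    exact ((tendsto_cdf_atBot _).eventually (eventually_le_nhds hp.1)).exists
  · rw [stdGaussianCDF_eq_cdf]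
    exact ((tendsto_cdf_atTop _).eventually (eventually_ge_nhds hp.2)).exists

theorem neyman_pearson {α : Type*} [MeasurableSpace α] {μ : Measure α} {p q f : α → ℝ}
    {S : Set α} {k : ℝ} (hp : Integrable p μ) (hq : Integrable q μ) (hS : MeasurableSet S)
    (hf : AEStronglyMeasurable f μ) (hf01 : ∀ z, f z ∈ Icc 0 1)
    (hin : ∀ z ∈ S, q z ≤ k * p z) (hout : ∀ z ∉ S, k * p z ≤ q z) :
    k * ∫ z, (f z - S.indicator 1 z) * p z ∂μ ≤ ∫ z, (f z - S.indicator 1 z) * q z ∂μ := by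
  set φ := fun z => f z - S.indicator 1 z
  have hφm : AEStronglyMeasurable φ μ :=
    hf.sub (measurable_const.indicator hS).aestronglyMeasurable
  have hφ1 : ∀ z, ‖φ z‖ ≤ 1 := fun z => by
    by_cases hz : z ∈ S <;>
      simp [φ, hz, abs_le] <;> constructor <;> linarith [(hf01 z).1, (hf01 z).2]
  have hsign : ∀ z, 0 ≤ φ z * q z - k * (φ z * p z) := fun z => by
    by_cases hz : z ∈ S
    · have := mul_nonneg_of_nonpos_of_nonpos (sub_nonpos.2 (hf01 z).2) (sub_nonpos.2 (hin z hz))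
      simp only [φ, indicator_of_mem hz, Pi.one_apply]
      linarith
    · have := mul_nonneg (hf01 z).1 (sub_nonneg.2 (hout z hz))
      simp only [φ, indicator_of_notMem hz, sub_zero]
      linarith
  have h : 0 ≤ ∫ z, (φ z * q z - k * (φ z * p z)) ∂μ := integral_nonneg hsign
  rw [integral_sub (hq.bdd_mul hφm (ae_of_all _ hφ1))
    ((hp.bdd_mul hφm (ae_of_all _ hφ1)).const_mul k), integral_const_mul] at h
  linarith

section IsoGaussian

variable {n : ℕ} {σ : ℝ}

noncomputable def isoGaussianPDF (n : ℕ) (σ : ℝ) (t : EuclideanSpace ℝ (Fin n)) : ℝ :=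
  (2 * π * σ ^ 2) ^ (-(n : ℝ) / 2) * rexp (-‖t‖ ^ 2 / (2 * σ ^ 2))

lemma isoGaussian_eq_withDensity :
    isoGaussian n σ = volume.withDensity fun t => ENNReal.ofReal (isoGaussianPDF n σ t) := rfl

lemma isoGaussianPDF_nonneg (t : EuclideanSpace ℝ (Fin n)) : 0 ≤ isoGaussianPDF n σ t := by
  unfold isoGaussianPDF
  positivity

lemma continuous_isoGaussianPDF : Continuous (isoGaussianPDF n σ) := by
  unfold isoGaussianPDF
  fun_prop

lemma isoGaussianPDF_sub_add (z x w : EuclideanSpace ℝ (Fin n)) :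
    isoGaussianPDF n σ (z - (x + w)) =
      rexp ((2 * ⟪z - x, w⟫ - ‖w‖ ^ 2) / (2 * σ ^ 2)) * isoGaussianPDF n σ (z - x) := by
  rw [isoGaussianPDF, isoGaussianPDF, mul_left_comm, ← Real.exp_add, sub_add_eq_sub_sub,
    norm_sub_sq_real]
  ring_nf

lemma integrable_isoGaussianPDF (hσ : σ ≠ 0) : Integrable (isoGaussianPDF n σ) := by
  have hb : 0 < ((2 * σ ^ 2)⁻¹ : ℂ).re := by norm_cast; positivity
  refine ((GaussianFourier.integrable_cexp_neg_mul_sq_norm_add hb 0 0).norm.const_mul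
    ((2 * π * σ ^ 2) ^ (-(n : ℝ) / 2))).congr (ae_of_all _ fun t => ?_)
  simp only [isoGaussianPDF, zero_mul, add_zero, Complex.norm_exp]
  norm_cast
  ring_nf

lemma isFiniteMeasure_isoGaussian (hσ : σ ≠ 0) : IsFiniteMeasure (isoGaussian n σ) :=
  isFiniteMeasure_withDensity_ofReal (integrable_isoGaussianPDF hσ).hasFiniteIntegral

lemma integral_isoGaussian {E : Type*} [NormedAddCommGroup E] [NormedSpace ℝ E]
    (g : EuclideanSpace ℝ (Fin n) → E) :
    ∫ t, g t ∂isoGaussian n σ = ∫ t, isoGaussianPDF n σ t • g t := by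
  rw [isoGaussian_eq_withDensity, integral_withDensity_eq_integral_toReal_smul
    continuous_isoGaussianPDF.measurable.ennreal_ofReal
    (ae_of_all _ fun _ => ENNReal.ofReal_lt_top)]
  simp_rw [ENNReal.toReal_ofReal (isoGaussianPDF_nonneg _)]

lemma integral_isoGaussian_comp_add (g : EuclideanSpace ℝ (Fin n) → ℝ)
    (x : EuclideanSpace ℝ (Fin n)) :
    ∫ t, g (x + t) ∂isoGaussian n σ = ∫ z, g z * isoGaussianPDF n σ (z - x) := by
  rw [integral_isoGaussian,
    ← integral_add_left_eq_self (fun z => g z * isoGaussianPDF n σ (z - x)) x]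
  simp [mul_comm]

lemma charFun_isoGaussian (hσ : σ ≠ 0) (t : EuclideanSpace ℝ (Fin n)) :
    charFun (isoGaussian n σ) t = Complex.exp (-(σ ^ 2 * ‖t‖ ^ 2) / 2) := by
  have hb : 0 < ((2 * σ ^ 2)⁻¹ : ℂ).re := by norm_cast; positivity
  have h2πσ : (0 : ℝ) < 2 * π * σ ^ 2 := by positivity
  have hintegrand : ∀ x : EuclideanSpace ℝ (Fin n),
      isoGaussianPDF n σ x • Complex.exp ((⟪x, t⟫ : ℂ) * Complex.I) =
        (((2 * π * σ ^ 2) ^ (-(n : ℝ) / 2) : ℝ) : ℂ) *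
          Complex.exp (-(2 * (σ : ℂ) ^ 2)⁻¹ * (‖x‖ : ℂ) ^ 2 + Complex.I * (⟪t, x⟫ : ℂ)) := by
    intro x
    simp only [isoGaussianPDF, Complex.real_smul, Complex.ofReal_mul, Complex.ofReal_exp,
      mul_assoc, ← Complex.exp_add, real_inner_comm t]
    push_cast
    ring_nf
  simp_rw [charFun_apply, integral_isoGaussian, hintegrand]
  rw [integral_const_mul, GaussianFourier.integral_cexp_neg_mul_sq_norm_add hb,
    finrank_euclideanSpace_fin]
  have hvar : (π : ℂ) / (2 * (σ : ℂ) ^ 2)⁻¹ = ((2 * π * σ ^ 2 : ℝ) : ℂ) := by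
    push_cast
    field_simp
  have hnorm : (((2 * π * σ ^ 2) ^ (-(n : ℝ) / 2) : ℝ) : ℂ) *
      ((2 * π * σ ^ 2 : ℝ) : ℂ) ^ ((n : ℂ) / 2) = 1 := by
    rw [show (n : ℂ) / 2 = ((n / 2 : ℝ) : ℂ) by push_cast; rfl, ← Complex.ofReal_cpow h2πσ.le,
      ← Complex.ofReal_mul, ← Real.rpow_add h2πσ, neg_div, neg_add_cancel, Real.rpow_zero,
      Complex.ofReal_one]
  rw [hvar, ← mul_assoc, hnorm, one_mul, Complex.I_sq]
  congr 1
  field_simp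
  ring

lemma map_inner_isoGaussian (hσ : σ ≠ 0) {u : EuclideanSpace ℝ (Fin n)} (hu : u ≠ 0) :
    (isoGaussian n σ).map (fun t => (σ * ‖u‖)⁻¹ * ⟪t, u⟫) = gaussianReal 0 1 := by
  have := isFiniteMeasure_isoGaussian (n := n) hσ
  refine Measure.ext_of_charFun (funext fun s => ?_)
  have hinner : ∀ t : EuclideanSpace ℝ (Fin n),
      ⟪(σ * ‖u‖)⁻¹ * ⟪t, u⟫, s⟫ = ⟪t, (s / (σ * ‖u‖)) • u⟫ := by
    intro t
    simp only [real_inner_smul_right, RCLike.inner_apply, conj_trivial]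
    ring
  rw [charFun_apply, integral_map (by fun_prop) (by fun_prop)]
  have hvar : σ ^ 2 * ‖(s / (σ * ‖u‖)) • u‖ ^ 2 = s ^ 2 := by
    rw [norm_smul, Real.norm_eq_abs, mul_pow, sq_abs]
    field_simp
  simp_rw [hinner]
  rw [← charFun_apply, charFun_isoGaussian hσ, charFun_gaussianReal]
  congr 1
  rw [← Complex.ofReal_pow, ← Complex.ofReal_pow, ← Complex.ofReal_mul, hvar]
  simp [neg_div]

lemma isoGaussian_real_halfspace (hσ : 0 < σ) {u : EuclideanSpace ℝ (Fin n)} (hu : u ≠ 0)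
    (v : EuclideanSpace ℝ (Fin n)) (c : ℝ) :
    (isoGaussian n σ).real {t | ⟪v + t, u⟫ ≤ c} = stdGaussianCDF ((c - ⟪v, u⟫) / (σ * ‖u‖)) := by
  have hσu : 0 < σ * ‖u‖ := mul_pos hσ (norm_pos_iff.2 hu)
  have hpre : {t | ⟪v + t, u⟫ ≤ c} =
      (fun t => (σ * ‖u‖)⁻¹ * ⟪t, u⟫) ⁻¹' Iic ((c - ⟪v, u⟫) / (σ * ‖u‖)) := by
    ext t
    rw [mem_ofPred_eq, mem_preimage, mem_Iic, inv_mul_le_iff₀ hσu, mul_div_cancel₀ _ hσu.ne',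
      inner_add_left, le_sub_iff_add_le']
  rw [hpre, ← map_measureReal_apply (by fun_prop) measurableSet_Iic,
    map_inner_isoGaussian hσ.ne' hu, ← cdf_eq_real, stdGaussianCDF_eq_cdf]

lemma integral_sub_indicator_halfspace_mul_isoGaussianPDF (hσ : 0 < σ)
    {f : EuclideanSpace ℝ (Fin n) → ℝ} (hf : Measurable f) (hf01 : ∀ z, f z ∈ Icc 0 1)
    {u : EuclideanSpace ℝ (Fin n)} (hu : u ≠ 0) (c : ℝ) (v : EuclideanSpace ℝ (Fin n)) :
    ∫ z, (f z - {z | ⟪z, u⟫ ≤ c}.indicator 1 z) * isoGaussianPDF n σ (z - v) =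
      ∫ t, f (v + t) ∂isoGaussian n σ - stdGaussianCDF ((c - ⟪v, u⟫) / (σ * ‖u‖)) := by
  have := isFiniteMeasure_isoGaussian (n := n) hσ.ne'
  have hS : MeasurableSet {t | ⟪v + t, u⟫ ≤ c} := measurableSet_le (by fun_prop) (by fun_prop)
  rw [← integral_isoGaussian_comp_add (fun z => f z - {z | ⟪z, u⟫ ≤ c}.indicator 1 z),
    integral_sub, ← isoGaussian_real_halfspace hσ hu v c, ← integral_indicator_one hS]
  · rfl
  · exact Integrable.of_bound (hf.comp (measurable_const_add v)).aestronglyMeasurable 1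
      (ae_of_all _ fun t => by
        simp only [Real.norm_eq_abs, abs_le]
        constructor <;> linarith [(hf01 (v + t)).1, (hf01 (v + t)).2])
  · exact (integrable_const 1).indicator hS

lemma stdGaussianCDF_sub_le_integral_isoGaussian (hσ : 0 < σ)
    {f : EuclideanSpace ℝ (Fin n) → ℝ} (hf : Measurable f) (hf01 : ∀ z, f z ∈ Icc 0 1)
    {x : EuclideanSpace ℝ (Fin n)} {a : ℝ}
    (ha : stdGaussianCDF a = ∫ t, f (x + t) ∂isoGaussian n σ)
    (y : EuclideanSpace ℝ (Fin n)) :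
    stdGaussianCDF (a - ‖x - y‖ / σ) ≤ ∫ t, f (y + t) ∂isoGaussian n σ := by
  obtain ⟨w, rfl⟩ : ∃ w, y = x + w := ⟨y - x, by abel⟩
  rw [sub_add_cancel_left, norm_neg]
  rcases eq_or_ne w 0 with rfl | hw
  · simp [ha]
  set c := ⟪x, w⟫ + σ * a * ‖w‖
  set κ := (2 * (σ * a * ‖w‖) - ‖w‖ ^ 2) / (2 * σ ^ 2)
  have hratio : ∀ z, rexp ((2 * ⟪z - x, w⟫ - ‖w‖ ^ 2) / (2 * σ ^ 2)) ≤ rexp κ ↔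
      z ∈ {z | ⟪z, w⟫ ≤ c} := fun z => by
    rw [exp_le_exp, div_le_div_iff_of_pos_right (by positivity), mem_ofPred_eq, inner_sub_left]
    constructor <;> intro h <;> linarith
  have hNP := neyman_pearson (S := {z | ⟪z, w⟫ ≤ c}) (k := rexp κ)
    ((integrable_isoGaussianPDF hσ.ne').comp_sub_right x)
    ((integrable_isoGaussianPDF hσ.ne').comp_sub_right (x + w))
    (measurableSet_le (by fun_prop) (by fun_prop)) hf.aestronglyMeasurable hf01
    (fun z hz => by
      rw [isoGaussianPDF_sub_add]
      exact mul_le_mul_of_nonneg_right ((hratio z).2 hz) (isoGaussianPDF_nonneg _))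
    (fun z hz => by
      rw [isoGaussianPDF_sub_add]
      exact mul_le_mul_of_nonneg_right (not_le.1 (mt (hratio z).1 hz)).le
        (isoGaussianPDF_nonneg _))
  rw [integral_sub_indicator_halfspace_mul_isoGaussianPDF hσ hf hf01 hw,
    integral_sub_indicator_halfspace_mul_isoGaussianPDF hσ hf hf01 hw] at hNP
  have hx : (c - ⟪x, w⟫) / (σ * ‖w‖) = a := by
    field_simp
    ring
  have hy : (c - ⟪x + w, w⟫) / (σ * ‖w‖) = a - ‖w‖ / σ := by
    rw [inner_add_left, real_inner_self_eq_norm_sq]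
    field_simp
    ring
  rw [hx, ← ha, sub_self, mul_zero, hy] at hNP
  linarith

end IsoGaussian

/-- for `σ > 0` and measurable `f : ℝⁿ → [0,1]` whose σ-smoothed
transform `f̂(x) = E_{X ~ N(0,σ²Iₙ)}[f(x + X)]` takes values in `(0,1)`, the map
`x ↦ Φ⁻¹(f̂(x))` is `(1/σ)`-Lipschitz for the Euclidean norm. -/
theorem probit_smoothed_lipschitz (n : ℕ) (σ : ℝ) (hσ : 0 < σ)
    (f : EuclideanSpace ℝ (Fin n) → ℝ) (hf : Measurable f)
    (hf01 : ∀ t, f t ∈ Set.Icc (0 : ℝ) 1)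
    (fhat : EuclideanSpace ℝ (Fin n) → ℝ)
    (hfhat : ∀ x, fhat x = ∫ t, f (x + t) ∂(isoGaussian n σ))
    (hfhat01 : ∀ x, fhat x ∈ Set.Ioo (0 : ℝ) 1) :
    ∀ x y : EuclideanSpace ℝ (Fin n),
      |stdGaussianCDFInv (fhat x) - stdGaussianCDFInv (fhat y)| ≤ ‖x - y‖ / σ := by
  have key : ∀ x y, stdGaussianCDFInv (fhat x) - ‖x - y‖ / σ ≤ stdGaussianCDFInv (fhat y) := by
    intro x y
    rw [← stdGaussianCDF_strictMono.le_iff_le, stdGaussianCDF_stdGaussianCDFInv (hfhat01 y),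
      hfhat y]
    exact stdGaussianCDF_sub_le_integral_isoGaussian hσ hf hf01
      ((stdGaussianCDF_stdGaussianCDFInv (hfhat01 x)).trans (hfhat x)) y
  intro x y
  have hyx := key y x
  rw [norm_sub_rev] at hyx
  rw [abs_sub_le_iff]
  constructor <;> linarith [key x y]
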